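/- arXiv:1112.4536 — 4 statements merged into one kernel-verified Lean document; each statement's English description precedes it below -/
import Mathlib

section
/- Let G = (C, S, E) be a bipartite graph with E ⊆ C × S. The following are equivalent: (1) for all c, c' ∈ C, N_G(c) ∩ N_G(c') ∈ {∅, N_G(c), N_G(c')}; (2) there do not exist s, s', s'' ∈ S and c, c' ∈ C with (c,s), (c,s'), (c',s'), (c',s'') ∈ E and (c,s''), (c',s) ∉ E; (3) there exists a perfect phylogeny for G, i.e., a phylogeny T for S such that N_G(c) ∈ T for every c ∈ C. -/
def IsPhylo {α : Type*} (S : Set α) (T : Set (Set α)) : Prop :=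
  (∀ X ∈ T, X ⊆ S) ∧ (∅ : Set α) ∈ T ∧ S ∈ T ∧ (∀ s ∈ S, ({s} : Set α) ∈ T) ∧
    ∀ X ∈ T, ∀ Y ∈ T, X ∩ Y = ∅ ∨ X ∩ Y = X ∨ X ∩ Y = Y

/-- Neighborhood of a character `c` in the bipartite graph with edge set `E`. -/
def Nbr {χ σ : Type*} (E : Set (χ × σ)) (c : χ) : Set σ := {s | (c, s) ∈ E}

/-- Condition (1): neighborhoods form a laminar family. -/
def MFree {χ σ : Type*} (E : Set (χ × σ)) : Prop :=
  ∀ c c' : χ, Nbr E c ∩ Nbr E c' = ∅ ∨ Nbr E c ∩ Nbr E c' = Nbr E c ∨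
    Nbr E c ∩ Nbr E c' = Nbr E c'

/-- The bipartite graph contains an induced `M`. -/
def HasM {χ σ : Type*} (E : Set (χ × σ)) : Prop :=
  ∃ (c c' : χ) (s s' s'' : σ), (c, s) ∈ E ∧ (c, s') ∈ E ∧ (c', s') ∈ E ∧ (c', s'') ∈ E ∧
    (c, s'') ∉ E ∧ (c', s) ∉ E

/-! Two neighbourhoods fail to be nested exactly when they overlap properly, and a proper overlap
of `N(c)` and `N(c')` is an induced `M`. Since `∅`, `S` and the singletons are nested with every
set, adding them to a pairwise nested family of neighbourhoods yields a phylogeny. -/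

namespace Set

variable {α : Type*}

def Nested (X Y : Set α) : Prop := X ∩ Y = ∅ ∨ X ∩ Y = X ∨ X ∩ Y = Y

theorem Nested.symm {X Y : Set α} (h : Nested X Y) : Nested Y X := by
  unfold Nested at *
  rw [inter_comm]
  tauto

theorem nested_iff_not_overlap {X Y : Set α} :
    Nested X Y ↔ ¬ ((X \ Y).Nonempty ∧ (X ∩ Y).Nonempty ∧ (Y \ X).Nonempty) := by
  simp only [Nested, inter_eq_left, inter_eq_right, sdiff_nonempty,
    ← not_nonempty_iff_eq_empty]
  tauto

theorem nested_empty_left (Y : Set α) : Nested ∅ Y := Or.inl (empty_inter Y)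

theorem nested_univ_left (Y : Set α) : Nested univ Y := Or.inr (Or.inr (univ_inter Y))

theorem nested_singleton_left (s : α) (Y : Set α) : Nested {s} Y := by
  by_cases hs : s ∈ Y
  · exact Or.inr (Or.inl (singleton_inter_of_mem hs))
  · exact Or.inl (singleton_inter_of_notMem hs)

theorem exists_isPhylo_univ_superset {F : Set (Set α)} (hF : ∀ X ∈ F, ∀ Y ∈ F, Nested X Y) :
    ∃ T, IsPhylo univ T ∧ F ⊆ T := by
  let B : Set (Set α) := insert ∅ (insert univ (range singleton))
  have hB : ∀ X ∈ B, ∀ Y, Nested X Y := by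
    rintro X (rfl | rfl | ⟨s, rfl⟩) Y
    exacts [nested_empty_left Y, nested_univ_left Y, nested_singleton_left s Y]
  refine ⟨B ∪ F, ⟨fun X _ => subset_univ X, .inl (.inl rfl), .inl (.inr (.inl rfl)),
    fun s _ => .inl (.inr (.inr ⟨s, rfl⟩)), ?_⟩, subset_union_right⟩
  rintro X (hX | hX) Y (hY | hY)
  exacts [hB X hX Y, hB X hX Y, (hB Y hY X).symm, hF X hX Y hY]

end Set

open Set

theorem IsPhylo.nested {α : Type*} {S : Set α} {T : Set (Set α)} (hT : IsPhylo S T)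
    {X Y : Set α} (hX : X ∈ T) (hY : Y ∈ T) : Nested X Y :=
  hT.2.2.2.2 X hX Y hY

theorem hasM_iff_exists_overlap {χ σ : Type*} (E : Set (χ × σ)) :
    HasM E ↔ ∃ c c', (Nbr E c \ Nbr E c').Nonempty ∧ (Nbr E c ∩ Nbr E c').Nonempty ∧
      (Nbr E c' \ Nbr E c).Nonempty := by
  simp only [HasM, Set.Nonempty, mem_sdiff, mem_inter_iff, Nbr, mem_ofPred_eq]
  constructor
  · rintro ⟨c, c', s, s', s'', hs, hs', hs'c', hs'', hs''c, hsc'⟩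
    exact ⟨c, c', ⟨s, hs, hsc'⟩, ⟨s', hs', hs'c'⟩, ⟨s'', hs'', hs''c⟩⟩
  · rintro ⟨c, c', ⟨s, hs, hsc'⟩, ⟨s', hs', hs'c'⟩, ⟨s'', hs'', hs''c⟩⟩
    exact ⟨c, c', s, s', s'', hs, hs', hs'c', hs'', hs''c, hsc'⟩

theorem mfree_iff_not_hasM {χ σ : Type*} (E : Set (χ × σ)) : MFree E ↔ ¬ HasM E := by
  simp only [hasM_iff_exists_overlap, not_exists, ← nested_iff_not_overlap]
  rfl

theorem mfree_iff_exists_isPhylo {χ σ : Type*} (E : Set (χ × σ)) :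
    MFree E ↔ ∃ T : Set (Set σ), IsPhylo univ T ∧ ∀ c, Nbr E c ∈ T := by
  constructor
  · intro h
    obtain ⟨T, hT, hFT⟩ := exists_isPhylo_univ_superset (F := range (Nbr E))
      (by rintro _ ⟨c, rfl⟩ _ ⟨c', rfl⟩; exact h c c')
    exact ⟨T, hT, fun c => hFT ⟨c, rfl⟩⟩
  · rintro ⟨T, hT, hET⟩ c c'
    exact hT.nested (hET c) (hET c')

theorem stmt_2_general {χ σ : Type*} (E : Set (χ × σ)) :
    (MFree E ↔ ¬ HasM E) ∧
    (MFree E ↔ ∃ T : Set (Set σ), IsPhylo (Set.univ : Set σ) T ∧ ∀ c : χ, Nbr E c ∈ T) :=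
  ⟨mfree_iff_not_hasM E, mfree_iff_exists_isPhylo E⟩

theorem stmt_2 {χ σ : Type*} [Fintype χ] [Fintype σ] (E : Set (χ × σ)) :
    (MFree E ↔ ¬ HasM E) ∧
    (MFree E ↔ ∃ T : Set (Set σ), IsPhylo (Set.univ : Set σ) T ∧ ∀ c : χ, Nbr E c ∈ T) :=
  stmt_2_general E
end

section
/- Let G = (C, S, E) be a bipartite graph satisfying: for all c, c' ∈ C, N_G(c) ∩ N_G(c') ∈ {∅, N_G(c), N_G(c')}. Define T_G = {∅, S} ∪ {N_G(c) : c ∈ C} ∪ {{s} : s ∈ S}. Then T_G is a perfect phylogeny for G. -/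
/-- The family `T_G = {∅, S} ∪ {N_G(c) : c ∈ C} ∪ {{s} : s ∈ S}` (here `S` is the whole type). -/
def TG {χ σ : Type*} (E : Set (χ × σ)) : Set (Set σ) :=
  {∅, Set.univ} ∪ Set.range (Nbr E) ∪ {X | ∃ s : σ, X = {s}}

def Laminar {α : Type*} (X Y : Set α) : Prop :=
  X ∩ Y = ∅ ∨ X ∩ Y = X ∨ X ∩ Y = Y

namespace Laminar

variable {α : Type*} {X Y : Set α}

theorem symm (h : Laminar X Y) : Laminar Y X := by
  unfold Laminar at *
  rw [Set.inter_comm]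
  tauto

theorem empty_left (Y : Set α) : Laminar ∅ Y :=
  Or.inl (Set.empty_inter Y)

theorem univ_left (Y : Set α) : Laminar Set.univ Y :=
  Or.inr (Or.inr (Set.univ_inter Y))

theorem singleton_left (s : α) (Y : Set α) : Laminar {s} Y := by
  by_cases hs : s ∈ Y
  · exact Or.inr (Or.inl (Set.singleton_inter_of_mem hs))
  · exact Or.inl (Set.singleton_inter_of_notMem hs)

end Laminar

theorem laminar_of_mem_TG_of_notMem_range {χ σ : Type*} {E : Set (χ × σ)} {X : Set σ}
    (hX : X ∈ TG E) (hXN : X ∉ Set.range (Nbr E)) (Y : Set σ) : Laminar X Y := by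
  rcases hX with ((rfl | rfl) | hN) | ⟨s, rfl⟩
  · exact Laminar.empty_left Y
  · exact Laminar.univ_left Y
  · exact absurd hN hXN
  · exact Laminar.singleton_left s Y

theorem laminar_of_mem_TG {χ σ : Type*} {E : Set (χ × σ)} (h : MFree E) {X Y : Set σ}
    (hX : X ∈ TG E) (hY : Y ∈ TG E) : Laminar X Y := by
  by_cases hXN : X ∈ Set.range (Nbr E)
  · by_cases hYN : Y ∈ Set.range (Nbr E)
    · obtain ⟨c, rfl⟩ := hXN
      obtain ⟨c', rfl⟩ := hYN
      exact h c c'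
    · exact (laminar_of_mem_TG_of_notMem_range hY hYN X).symm
  · exact laminar_of_mem_TG_of_notMem_range hX hXN Y

theorem stmt_3_general {χ σ : Type*} (E : Set (χ × σ))
    (h : MFree E) :
    IsPhylo (Set.univ : Set σ) (TG E) ∧ ∀ c : χ, Nbr E c ∈ TG E := by
  have nbr_mem : ∀ c : χ, Nbr E c ∈ TG E := fun c => Or.inl (Or.inr ⟨c, rfl⟩)
  refine ⟨⟨fun X _ => Set.subset_univ X, Or.inl (Or.inl (Or.inl rfl)),
    Or.inl (Or.inl (Or.inr rfl)), fun s _ => Or.inr ⟨s, rfl⟩, ?_⟩, nbr_mem⟩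
  exact fun X hX Y hY => laminar_of_mem_TG h hX hY

theorem stmt_3 {χ σ : Type*} [Fintype χ] [Fintype σ] (E : Set (χ × σ))
    (h : MFree E) :
    IsPhylo (Set.univ : Set σ) (TG E) ∧ ∀ c : χ, Nbr E c ∈ TG E :=
  stmt_3_general E h
end

section
/- Let G = (C, S, E) be a bipartite graph that contains an 'M' as induced subgraph, i.e., there exist s, s', s'' ∈ S and c, c' ∈ C with (c,s), (c,s'), (c',s'), (c',s'') ∈ E and (c,s''), (c',s) ∉ E. Then there is no perfect phylogeny for G. -/
theorem Set.not_laminar_of_overlap {α : Type*} {X Y : Set α} {a b d : α}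
    (haX : a ∈ X) (haY : a ∉ Y) (hbX : b ∈ X) (hbY : b ∈ Y) (hdY : d ∈ Y) (hdX : d ∉ X) :
    ¬ (X ∩ Y = ∅ ∨ X ∩ Y = X ∨ X ∩ Y = Y) := by
  rintro (h | h | h)
  · exact Set.eq_empty_iff_forall_notMem.1 h b ⟨hbX, hbY⟩
  · exact haY (Set.inter_eq_left.1 h haX)
  · exact hdX (Set.inter_eq_right.1 h hdY)

theorem stmt_6_general {χ σ : Type*} (E : Set (χ × σ))
    (hM : ∃ (c c' : χ) (s s' s'' : σ), (c, s) ∈ E ∧ (c, s') ∈ E ∧ (c', s') ∈ E ∧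
      (c', s'') ∈ E ∧ (c, s'') ∉ E ∧ (c', s) ∉ E) :
    ¬ ∃ T : Set (Set σ), IsPhylo (Set.univ : Set σ) T ∧ ∀ c : χ, Nbr E c ∈ T := by
  rintro ⟨T, ⟨-, -, -, -, hlaminar⟩, hNbr⟩
  obtain ⟨c, c', s, s', s'', hcs, hcs', hc's', hc's'', hcs'', hc's⟩ := hM
  exact Set.not_laminar_of_overlap (X := Nbr E c) (Y := Nbr E c')
    hcs hc's hcs' hc's' hc's'' hcs'' (hlaminar _ (hNbr c) _ (hNbr c'))

theorem stmt_6 {χ σ : Type*} [Fintype χ] [Fintype σ] (E : Set (χ × σ))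
    (hM : ∃ (c c' : χ) (s s' s'' : σ), (c, s) ∈ E ∧ (c, s') ∈ E ∧ (c', s') ∈ E ∧
      (c', s'') ∈ E ∧ (c, s'') ∉ E ∧ (c', s) ∉ E) :
    ¬ ∃ T : Set (Set σ), IsPhylo (Set.univ : Set σ) T ∧ ∀ c : χ, Nbr E c ∈ T :=
  stmt_6_general E hM
end

section
/- Let α, β be positive extended integers with γ = min{α, β}, and let H = (C, S, F) be constructed from an RTI instance (S, R) as follows: R = {⟨x_c y_c | z_c⟩ : c ∈ C}, F(c,s) = β if s ∈ {x_c, y_c}, F(c,s) = −α if s = z_c, F(c,s) = 0 otherwise. If there exists a phylogeny T for S such that at most k resolved triplets of R do not fit T, then there exists an M-free edition G of H with Δ(G, H) ≤ γk. -/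
open scoped Classical

/-- `⟨xy|z⟩` fits `T`: some cluster `X` of `T` satisfies `X ∩ {x,y,z} = {x,y}`. -/
def Fits {α : Type*} (T : Set (Set α)) (x y z : α) : Prop :=
  ∃ X ∈ T, X ∩ {x, y, z} = ({x, y} : Set α)

noncomputable def Delta {χ σ : Type*} [Fintype χ] [Fintype σ]
    (E : Finset (χ × σ)) (F : χ × σ → EReal) : EReal :=
  ∑ e : χ × σ, if e ∈ E then max 0 (-F e) else max 0 (F e)

/-!
Give every `c ∈ C` a cluster of `T` as its neighbourhood. Since `T` is laminar, the
resulting edition is M-free. If `⟨x_c y_c | z_c⟩` fits `T`, a witnessing cluster contains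
`x_c, y_c` but not `z_c`, so row `c` costs nothing; otherwise the cluster `S` costs `α` and `{x_c}`
costs `β`, and the cheaper one costs `γ`. Hence the edition costs `γ` per non-fitting triplet.
-/

section Edition

variable {χ σ : Type*} [Fintype χ] [Fintype σ]

noncomputable def finsetOfNbrs (X : χ → Set σ) : Finset (χ × σ) :=
  Finset.univ.filter fun e => e.2 ∈ X e.1

@[simp]
lemma nbr_finsetOfNbrs (X : χ → Set σ) (c : χ) :
    Nbr (↑(finsetOfNbrs X) : Set (χ × σ)) c = X c := by
  ext s
  simp [Nbr, finsetOfNbrs]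

lemma mFree_finsetOfNbrs {X : χ → Set σ}
    (hX : ∀ c c', X c ∩ X c' = ∅ ∨ X c ∩ X c' = X c ∨ X c ∩ X c' = X c') :
    MFree (↑(finsetOfNbrs X) : Set (χ × σ)) := by
  intro c c'
  simpa only [nbr_finsetOfNbrs] using hX c c'

noncomputable def rowCost (X : Set σ) (w : σ → EReal) : EReal :=
  ∑ s, if s ∈ X then max 0 (-w s) else max 0 (w s)

lemma delta_finsetOfNbrs (X : χ → Set σ) (F : χ × σ → EReal) :
    Delta (finsetOfNbrs X) F = ∑ c, rowCost (X c) (fun s => F (c, s)) := by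
  simp [Delta, rowCost, finsetOfNbrs, Fintype.sum_prod_type]

end Edition

section Triplet

variable {σ : Type*} {α β : EReal} {x y z : σ}

noncomputable def tripletWeight (α β : EReal) (x y z : σ) (s : σ) : EReal :=
  if s = x ∨ s = y then β else if s = z then -α else 0

lemma editCost_tripletWeight (hα : 0 ≤ α) (hβ : 0 ≤ β) (X : Set σ) (s : σ) :
    (if s ∈ X then max 0 (-tripletWeight α β x y z s) else max 0 (tripletWeight α β x y z s)) =
      if s = x ∨ s = y then (if s ∈ X then 0 else β) else if s = z ∧ s ∈ X then α else 0 := by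
  unfold tripletWeight
  split_ifs <;> aesop

variable [Fintype σ]

lemma rowCost_tripletWeight_of_fits (hα : 0 ≤ α) (hβ : 0 ≤ β) {X : Set σ}
    (hX : X ∩ {x, y, z} = {x, y}) : rowCost X (tripletWeight α β x y z) = 0 := by
  have hx : x ∈ X := (hX.symm.subset (by simp)).1
  have hy : y ∈ X := (hX.symm.subset (by simp)).1
  have hz : z ∉ X ∨ z = x ∨ z = y := by
    by_contra! h
    have : z ∈ ({x, y} : Set σ) := hX.subset ⟨h.1, by simp⟩
    simp_all
  refine Finset.sum_eq_zero fun s _ => ?_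
  rw [editCost_tripletWeight hα hβ]
  aesop

lemma rowCost_univ_tripletWeight (hα : 0 ≤ α) (hβ : 0 ≤ β) (hxz : x ≠ z) (hyz : y ≠ z) :
    rowCost Set.univ (tripletWeight α β x y z) = α := by
  rw [rowCost, Fintype.sum_eq_single z]
  · rw [editCost_tripletWeight hα hβ]
    simp [hxz.symm, hyz.symm]
  · intro s hs
    rw [editCost_tripletWeight hα hβ]
    simp [hs]

lemma rowCost_singleton_tripletWeight (hα : 0 ≤ α) (hβ : 0 ≤ β) (hxy : x ≠ y) :
    rowCost {x} (tripletWeight α β x y z) = β := by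
  rw [rowCost, Fintype.sum_eq_single y]
  · rw [editCost_tripletWeight hα hβ]
    simp [hxy.symm]
  · intro s hs
    rw [editCost_tripletWeight hα hβ]
    by_cases hsx : s = x <;> simp [hs, hsx]

end Triplet

section Cluster

variable {σ : Type*} {T : Set (Set σ)} {α β : EReal} {x y z : σ}

noncomputable def tripletCluster (T : Set (Set σ)) (α β : EReal) (x y z : σ) : Set σ :=
  if h : Fits T x y z then h.choose else if α ≤ β then Set.univ else {x}

lemma tripletCluster_mem (hT : IsPhylo Set.univ T) : tripletCluster T α β x y z ∈ T := by
  unfold tripletCluster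
  split_ifs with hfit
  · exact hfit.choose_spec.1
  · exact hT.2.2.1
  · exact hT.2.2.2.1 x trivial

lemma rowCost_tripletCluster [Fintype σ] (hα : 0 ≤ α) (hβ : 0 ≤ β)
    (hd : x ≠ y ∧ x ≠ z ∧ y ≠ z) :
    rowCost (tripletCluster T α β x y z) (tripletWeight α β x y z) =
      if Fits T x y z then 0 else min α β := by
  obtain ⟨hxy, hxz, hyz⟩ := hd
  unfold tripletCluster
  split_ifs with hfit hαβ
  · exact rowCost_tripletWeight_of_fits hα hβ hfit.choose_spec.2
  · rw [rowCost_univ_tripletWeight hα hβ hxz hyz, min_eq_left hαβ]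
  · rw [rowCost_singleton_tripletWeight hα hβ hxy, min_eq_right (le_of_not_ge hαβ)]

end Cluster

theorem stmt_11_general {σ C : Type*} [Fintype σ] [Fintype C]
    (x y z : C → σ) (hd : ∀ c, x c ≠ y c ∧ x c ≠ z c ∧ y c ≠ z c)
    (α β : EReal) (hα : 0 < α) (hβ : 0 < β)
    (F : C × σ → EReal)
    (hF : ∀ c s, F (c, s) = if s = x c ∨ s = y c then β else if s = z c then -α else 0)
    (k : ℕ)
    (hT : ∃ T : Set (Set σ), IsPhylo (Set.univ : Set σ) T ∧
      (Finset.univ.filter fun c : C => ¬ Fits T (x c) (y c) (z c)).card ≤ k) :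
    ∃ E : Finset (C × σ), MFree (↑E : Set (C × σ)) ∧
      Delta E F ≤ min α β * ((k : ℝ) : EReal) := by
  obtain ⟨T, hT, hcard⟩ := hT
  set X := fun c => tripletCluster T α β (x c) (y c) (z c)
  have hXT : ∀ c, X c ∈ T := fun c => tripletCluster_mem hT
  refine ⟨finsetOfNbrs X, mFree_finsetOfNbrs fun c c' => hT.2.2.2.2 _ (hXT c) _ (hXT c'), ?_⟩
  have hrow : ∀ c, rowCost (X c) (fun s => F (c, s)) =
      if Fits T (x c) (y c) (z c) then 0 else min α β := fun c => by
    simp only [hF]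
    exact rowCost_tripletCluster hα.le hβ.le (hd c)
  calc Delta (finsetOfNbrs X) F
      = ∑ c, if Fits T (x c) (y c) (z c) then 0 else min α β := by
        simp only [delta_finsetOfNbrs, hrow]
    _ = (Finset.univ.filter fun c : C => ¬ Fits T (x c) (y c) (z c)).card • min α β := by
        simp [Finset.sum_ite]
    _ ≤ min α β * ((k : ℝ) : EReal) := by
        rw [EReal.nsmul_eq_mul, mul_comm]
        exact mul_le_mul_of_nonneg_left (by exact_mod_cast hcard) (le_min hα.le hβ.le)

theorem stmt_11 {σ C : Type*} [Fintype σ] [Fintype C]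
    (x y z : C → σ) (hd : ∀ c, x c ≠ y c ∧ x c ≠ z c ∧ y c ≠ z c)
    (α β : EReal) (hα : 0 < α) (hβ : 0 < β)
    (hαi : α = ⊤ ∨ ∃ n : ℤ, α = ((n : ℝ) : EReal))
    (hβi : β = ⊤ ∨ ∃ n : ℤ, β = ((n : ℝ) : EReal))
    (F : C × σ → EReal)
    (hF : ∀ c s, F (c, s) = if s = x c ∨ s = y c then β else if s = z c then -α else 0)
    (k : ℕ)
    (hT : ∃ T : Set (Set σ), IsPhylo (Set.univ : Set σ) T ∧
      (Finset.univ.filter fun c : C => ¬ Fits T (x c) (y c) (z c)).card ≤ k) :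
    ∃ E : Finset (C × σ), MFree (↑E : Set (C × σ)) ∧
      Delta E F ≤ min α β * ((k : ℝ) : EReal) :=
  stmt_11_general x y z hd α β hα hβ F hF k hT
end
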